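/- Let h ∈ ℂ^{N_b×N_b} be Hermitian, Δ ∈ ℂ^{N_b×N_b} be antisymmetric, 𝓗 = [[h, Δ], [−Δ̄, −h̄]], and β ∈ ℝ. Then the matrix I + exp(β𝓗) is invertible, and R := (I + exp(β𝓗))⁻¹ has the block form R = [[ρ, κ], [−κ̄, I − ρ̄]] for some ρ, κ ∈ ℂ^{N_b×N_b} with ρ Hermitian (ρ† = ρ) and κ antisymmetric (κᵀ = −κ). -/

import Mathlib

/-!
The quasi-particle Hamiltonian `𝓗` is Hermitian and odd under particle–hole conjugation
`M ↦ Σ M̄ Σ`, where `Σ` swaps the two blocks. Hermiticity makes `1 + exp(β𝓗)` positive definite,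
hence invertible, with Hermitian inverse `R`. Particle–hole conjugation is a continuous ring
homomorphism, so it commutes with `exp` and with inversion, and turns `R` into
`(1 + exp(-β𝓗))⁻¹ = 1 - R` (the identity `f(-x) = 1 - f(x)` of the Fermi function).
Read blockwise, `Rᴴ = R` and `Σ R̄ Σ = 1 - R` are exactly the claimed block structure.
-/

open Matrix NormedSpace
open scoped ComplexOrder

section Exponential

variable {n 𝕜 : Type*} [Fintype n] [DecidableEq n] [RCLike 𝕜]

theorem Matrix.IsHermitian.posSemidef_exp {A : Matrix n n 𝕜} (hA : A.IsHermitian) :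
    (NormedSpace.exp A).PosSemidef := by
  have hhalf : ((2⁻¹ : ℝ) • A).IsHermitian := hA.smul (by simp [IsSelfAdjoint])
  have hsplit : NormedSpace.exp A =
      (NormedSpace.exp ((2⁻¹ : ℝ) • A))ᴴ * NormedSpace.exp ((2⁻¹ : ℝ) • A) := by
    rw [← exp_conjTranspose, hhalf.eq, ← exp_add_of_commute _ _ (Commute.refl _), ← add_smul]
    norm_num
  exact hsplit ▸ posSemidef_conjTranspose_mul_self _

theorem Matrix.IsHermitian.posDef_one_add_exp {A : Matrix n n 𝕜} (hA : A.IsHermitian) :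
    (1 + NormedSpace.exp A).PosDef :=
  PosDef.one.add_posSemidef hA.posSemidef_exp

theorem Matrix.inv_one_add_exp_neg (A : Matrix n n 𝕜) (hA : IsUnit (1 + exp A)) :
    (1 + exp (-A))⁻¹ = 1 - (1 + exp A)⁻¹ := by
  have hS : (1 + exp A)⁻¹ * (1 + exp A) = 1 :=
    nonsing_inv_mul _ ((isUnit_iff_isUnit_det _).1 hA)
  have hE : exp A * (exp A)⁻¹ = 1 :=
    mul_nonsing_inv _ ((isUnit_iff_isUnit_det _).1 (isUnit_exp A))
  have hcompl : 1 - (1 + exp A)⁻¹ = (1 + exp A)⁻¹ * exp A := by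
    nth_rewrite 1 [← hS]
    rw [mul_one_add, add_sub_cancel_left]
  refine inv_eq_left_inv ?_
  calc (1 - (1 + exp A)⁻¹) * (1 + exp (-A))
      = (1 + exp A)⁻¹ * exp A * (1 + (exp A)⁻¹) := by rw [hcompl, exp_neg]
    _ = 1 := by rw [mul_assoc, mul_one_add, hE, add_comm (exp A) 1, hS]

attribute [local instance] Matrix.linftyOpNormedRing Matrix.linftyOpNormedAlgebra in
theorem RingHom.map_matrix_exp {m : Type*} [Fintype m] [DecidableEq m]
    (f : Matrix n n 𝕜 →+* Matrix m m 𝕜) (hf : Continuous f) (A : Matrix n n 𝕜) :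
    f (exp A) = exp (f A) :=
  NormedSpace.map_exp f hf A

end Exponential

theorem RingHom.map_nonsing_inv {n m α β : Type*} [Fintype n] [DecidableEq n] [Fintype m]
    [DecidableEq m] [CommRing α] [CommRing β] (f : Matrix n n α →+* Matrix m m β)
    {M : Matrix n n α} (hM : IsUnit M) : f M⁻¹ = (f M)⁻¹ := by
  refine (inv_eq_left_inv ?_).symm
  rw [← map_mul, nonsing_inv_mul _ ((isUnit_iff_isUnit_det M).1 hM), map_one]

section QuasiparticleHamiltonian

variable {n α : Type*} [CommRing α] [StarRing α]

def Matrix.quasiparticleHamiltonian (h Δ : Matrix n n α) : Matrix (n ⊕ n) (n ⊕ n) α :=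
  fromBlocks h Δ (-(Δ.map (starRingEnd α))) (-(h.map (starRingEnd α)))

theorem Matrix.isHermitian_quasiparticleHamiltonian {h Δ : Matrix n n α} (hh : h.IsHermitian)
    (hΔ : Δᵀ = -Δ) : (quasiparticleHamiltonian h Δ).IsHermitian := by
  have hΔ' (i j : n) : Δ j i = -Δ i j := congrFun₂ hΔ i j
  rw [IsHermitian, quasiparticleHamiltonian, fromBlocks_conjTranspose, hh.eq]
  congr 1 <;> ext i j <;> simp [starRingEnd_apply, hΔ' i j, hh.apply j i]

variable [Fintype n] [DecidableEq n]

variable (n α) in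
/-- `M ↦ Σ M̄ Σ` with `Σ = [[0, 1], [1, 0]]`: conjugation by `Σ` is reindexing along `Sum.swap`. -/
def Matrix.particleHoleConj : Matrix (n ⊕ n) (n ⊕ n) α →+* Matrix (n ⊕ n) (n ⊕ n) α :=
  (reindexAlgEquiv α α (Equiv.sumComm n n)).toRingHom.comp (starRingEnd α).mapMatrix

theorem Matrix.particleHoleConj_apply (M : Matrix (n ⊕ n) (n ⊕ n) α) :
    particleHoleConj n α M = (M.map (starRingEnd α)).submatrix Sum.swap Sum.swap :=
  rfl

theorem Matrix.particleHoleConj_fromBlocks (A B C D : Matrix n n α) :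
    particleHoleConj n α (fromBlocks A B C D) =
      fromBlocks (D.map (starRingEnd α)) (C.map (starRingEnd α))
        (B.map (starRingEnd α)) (A.map (starRingEnd α)) := by
  rw [particleHoleConj_apply, fromBlocks_map, fromBlocks_submatrix_sum_swap_sum_swap]

theorem Matrix.particleHoleConj_smul (c : α) (M : Matrix (n ⊕ n) (n ⊕ n) α) :
    particleHoleConj n α (c • M) = star c • particleHoleConj n α M := by
  ext i j
  simp [particleHoleConj_apply, starRingEnd_apply]

theorem Matrix.continuous_particleHoleConj [TopologicalSpace α] [ContinuousStar α] :
    Continuous (particleHoleConj n α) :=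
  (continuous_id.matrix_map continuous_star).matrix_submatrix _ _

theorem Matrix.particleHoleConj_quasiparticleHamiltonian (h Δ : Matrix n n α) :
    particleHoleConj n α (quasiparticleHamiltonian h Δ) = -quasiparticleHamiltonian h Δ := by
  rw [quasiparticleHamiltonian, particleHoleConj_fromBlocks, fromBlocks_neg]
  congr 1 <;> ext i j <;> simp

theorem Matrix.exists_fromBlocks_of_isHermitian_of_particleHoleConj
    {R : Matrix (n ⊕ n) (n ⊕ n) α} (hR : R.IsHermitian) (hph : particleHoleConj n α R = 1 - R) :
    ∃ ρ κ : Matrix n n α, ρ.IsHermitian ∧ κᵀ = -κ ∧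
      R = fromBlocks ρ κ (-(κ.map (starRingEnd α))) (1 - ρ.map (starRingEnd α)) := by
  obtain ⟨A, B, C, D, rfl⟩ : ∃ A B C D, R = fromBlocks A B C D :=
    ⟨_, _, _, _, (fromBlocks_toBlocks R).symm⟩
  rw [IsHermitian, fromBlocks_conjTranspose, fromBlocks_inj] at hR
  rw [particleHoleConj_fromBlocks, eq_sub_iff_add_eq, fromBlocks_add, ← fromBlocks_one,
    fromBlocks_inj] at hph
  obtain ⟨hA, hCB, -, -⟩ := hR
  obtain ⟨-, hCB', hBC, hAD⟩ := hph
  refine ⟨A, B, hA, ?_, ?_⟩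
  · calc Bᵀ = C.map (starRingEnd α) := by rw [← hCB]; rfl
      _ = -B := eq_neg_of_add_eq_zero_left hCB'
  · rw [eq_neg_of_add_eq_zero_right hBC, eq_sub_of_add_eq' hAD]

end QuasiparticleHamiltonian

section FermiDirac

variable {n 𝕜 : Type*} [Fintype n] [DecidableEq n] [RCLike 𝕜]

theorem Matrix.particleHoleConj_inv_one_add_exp {A : Matrix (n ⊕ n) (n ⊕ n) 𝕜}
    (hph : particleHoleConj n 𝕜 A = -A) (hA : IsUnit (1 + exp A)) :
    particleHoleConj n 𝕜 (1 + exp A)⁻¹ = 1 - (1 + exp A)⁻¹ := by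
  rw [RingHom.map_nonsing_inv _ hA, map_add, map_one,
    RingHom.map_matrix_exp _ continuous_particleHoleConj, hph, inv_one_add_exp_neg A hA]

theorem Matrix.exists_fromBlocks_inv_one_add_exp {A : Matrix (n ⊕ n) (n ⊕ n) 𝕜}
    (hA : A.IsHermitian) (hph : particleHoleConj n 𝕜 A = -A) :
    IsUnit (1 + exp A) ∧ ∃ ρ κ : Matrix n n 𝕜, ρ.IsHermitian ∧ κᵀ = -κ ∧
      (1 + exp A)⁻¹ = fromBlocks ρ κ (-(κ.map (starRingEnd 𝕜))) (1 - ρ.map (starRingEnd 𝕜)) := by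
  have hpos := hA.posDef_one_add_exp
  exact ⟨hpos.isUnit, exists_fromBlocks_of_isHermitian_of_particleHoleConj hpos.isHermitian.inv
    (particleHoleConj_inv_one_add_exp hph hpos.isUnit)⟩

end FermiDirac

/-- The finite-temperature generalized density matrix
`R = (I + exp(β𝓗))⁻¹` of the quasi-particle Hamiltonian
`𝓗 = [[h, Δ], [−Δ̄, −h̄]]` is well defined (`I + exp(β𝓗)` is invertible)
and has the generalized density matrix block structure
`R = [[ρ, κ], [−κ̄, I − ρ̄]]` with `ρ` Hermitian and `κ` antisymmetric. -/
theorem finite_temperature_density_matrix_block_structure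
    (Nb : ℕ)
    (h Δ : Matrix (Fin Nb) (Fin Nb) ℂ)
    (hh : hᴴ = h) (hΔ : Δᵀ = -Δ) (β : ℝ) :
    IsUnit (1 + NormedSpace.exp ((β : ℂ) •
      Matrix.fromBlocks h Δ (-(Δ.map (starRingEnd ℂ)))
        (-(h.map (starRingEnd ℂ))))) ∧
    ∃ ρ κ : Matrix (Fin Nb) (Fin Nb) ℂ,
      ρᴴ = ρ ∧ κᵀ = -κ ∧
      (1 + NormedSpace.exp ((β : ℂ) •
          Matrix.fromBlocks h Δ (-(Δ.map (starRingEnd ℂ)))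
            (-(h.map (starRingEnd ℂ)))))⁻¹ =
        Matrix.fromBlocks ρ κ (-(κ.map (starRingEnd ℂ)))
          (1 - ρ.map (starRingEnd ℂ)) := by
  have hherm : ((β : ℂ) • quasiparticleHamiltonian h Δ).IsHermitian :=
    (isHermitian_quasiparticleHamiltonian hh hΔ).smul (Complex.conj_ofReal β)
  have hph : particleHoleConj (Fin Nb) ℂ ((β : ℂ) • quasiparticleHamiltonian h Δ) =
      -((β : ℂ) • quasiparticleHamiltonian h Δ) := by
    rw [particleHoleConj_smul, particleHoleConj_quasiparticleHamiltonian, smul_neg,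
      Complex.star_def, Complex.conj_ofReal]
  exact exists_fromBlocks_inv_one_add_exp hherm hph
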